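/- arXiv:2509.18430 — 7 statements merged into one kernel-verified Lean document; each statement's English description precedes it below -/
import Mathlib

section
/- Let d be a natural number with d ≥ 4 and let Y, B, V be positive real numbers. Assume B^(2/(d-1)) ≥ (d/(d-2))·Y and V ≥ B^((d-2)/(d-1)) · Real.sqrt((4*(d-1)/(d-2))·Y). Then V^(2/d) ≥ (4*(d-1)/(d-2))^(1/d) · (d/(d-2))^((d-2)/d) · Y^((d-1)/d). -/
open Real

lemma rpow_mul_le_of_le_rpow {x y s r : ℝ} (hx : 0 ≤ x) (hy : 0 ≤ y) (hr : 0 ≤ r)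
    (h : y ≤ x ^ s) : y ^ r ≤ x ^ (s * r) := by
  rw [rpow_mul hx]
  exact rpow_le_rpow hy h hr

lemma rpow_mul_rpow_rpow {x y p q r : ℝ} (hx : 0 ≤ x) (hy : 0 ≤ y) :
    (x ^ p * y ^ q) ^ r = x ^ (p * r) * y ^ (q * r) := by
  rw [mul_rpow (rpow_nonneg hx p) (rpow_nonneg hy q), rpow_mul hx, rpow_mul hy]

theorem le_rpow_of_le_rpow_of_rpow_mul_sqrt_le {n a c Y B V : ℝ} (hn : 2 < n)
    (ha : 0 < a) (hc : 0 < c) (hY : 0 < Y) (hB : 0 ≤ B)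
    (hGH : a * Y ≤ B ^ (2 / (n - 1)))
    (hCLW : B ^ ((n - 2) / (n - 1)) * √(c * Y) ≤ V) :
    c ^ (1 / n) * a ^ ((n - 2) / n) * Y ^ ((n - 1) / n) ≤ V ^ (2 / n) := by
  have hn1 : n - 1 ≠ 0 := by linarith
  have hn0 : n ≠ 0 := by linarith
  have haY : 0 ≤ a * Y := by positivity
  have hcY : 0 ≤ c * Y := by positivity
  have hB_lower : (a * Y) ^ ((n - 2) / 2) ≤ B ^ ((n - 2) / (n - 1)) := by
    convert rpow_mul_le_of_le_rpow hB haY (by linarith : 0 ≤ (n - 2) / 2) hGH using 2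
    field_simp
  have hV_lower : (a * Y) ^ ((n - 2) / 2) * (c * Y) ^ (1 / 2 : ℝ) ≤ V := by
    rw [← sqrt_eq_rpow]
    exact (mul_le_mul_of_nonneg_right hB_lower (sqrt_nonneg _)).trans hCLW
  calc c ^ (1 / n) * a ^ ((n - 2) / n) * Y ^ ((n - 1) / n)
      = ((a * Y) ^ ((n - 2) / 2) * (c * Y) ^ (1 / 2 : ℝ)) ^ (2 / n) := by
        rw [rpow_mul_rpow_rpow haY hcY, mul_rpow ha.le hY.le, mul_rpow hc.le hY.le,
          show (n - 1) / n = (n - 2) / n + 1 / n by field_simp; ring, rpow_add hY]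
        field_simp
    _ ≤ V ^ (2 / n) := rpow_le_rpow (by positivity) hV_lower (by positivity)

theorem stmt_0_general (d : ℕ) (hd : 4 ≤ d) (Y B V : ℝ) (hY : 0 < Y) (hB : 0 < B)
    (h1 : B ^ ((2 : ℝ) / ((d : ℝ) - 1)) ≥ ((d : ℝ) / ((d : ℝ) - 2)) * Y)
    (h2 : V ≥ B ^ (((d : ℝ) - 2) / ((d : ℝ) - 1)) *
      Real.sqrt ((4 * ((d : ℝ) - 1) / ((d : ℝ) - 2)) * Y)) :
    V ^ ((2 : ℝ) / (d : ℝ)) ≥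
      (4 * ((d : ℝ) - 1) / ((d : ℝ) - 2)) ^ ((1 : ℝ) / (d : ℝ)) *
        ((d : ℝ) / ((d : ℝ) - 2)) ^ (((d : ℝ) - 2) / (d : ℝ)) *
        Y ^ (((d : ℝ) - 1) / (d : ℝ)) := by
  have hd4 : (4 : ℝ) ≤ d := by exact_mod_cast hd
  have hd2 : (0 : ℝ) < d - 2 := by linarith
  exact le_rpow_of_le_rpow_of_rpow_mul_sqrt_le (by linarith) (div_pos (by linarith) hd2)
    (div_pos (by linarith) hd2) hY hB.le h1 h2

/-- Quantitative core of Theorem 1.1: combining the Gursky–Han and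
Chen–Lai–Wang inequalities yields the lower bound on `V ^ (2/d)`. -/
theorem stmt_0 (d : ℕ) (hd : 4 ≤ d) (Y B V : ℝ) (hY : 0 < Y) (hB : 0 < B) (hV : 0 < V)
    (h1 : B ^ ((2 : ℝ) / ((d : ℝ) - 1)) ≥ ((d : ℝ) / ((d : ℝ) - 2)) * Y)
    (h2 : V ≥ B ^ (((d : ℝ) - 2) / ((d : ℝ) - 1)) *
      Real.sqrt ((4 * ((d : ℝ) - 1) / ((d : ℝ) - 2)) * Y)) :
    V ^ ((2 : ℝ) / (d : ℝ)) ≥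
      (4 * ((d : ℝ) - 1) / ((d : ℝ) - 2)) ^ ((1 : ℝ) / (d : ℝ)) *
        ((d : ℝ) / ((d : ℝ) - 2)) ^ (((d : ℝ) - 2) / (d : ℝ)) *
        Y ^ (((d : ℝ) - 1) / (d : ℝ)) :=
  stmt_0_general d hd Y B V hY hB h1 h2
end

section
/- Let s₀ be a real number and let φ : ℝ → ℝ be a function which is differentiable at every s ≥ s₀ and satisfies φ'(s) ≥ −(1/8)·|φ(s)| + (1/2)·(1 − φ(s)²) for all s ≥ s₀. If φ(s₀) ≥ 0, then φ(s) ≥ 0 for all s ≥ s₀. -/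
/-! At a zero of `φ` the inequality gives `φ' ≥ 1/2 > 0`, so `φ` can never cross `0` from above:
this is the barrier comparison `image_le_of_deriv_right_lt_deriv_boundary` applied to `-φ` and
the constant barrier `0`. -/

open Set

theorem nonneg_of_deriv_pos_of_eq_zero {φ : ℝ → ℝ} {s₀ : ℝ}
    (hdiff : ∀ s, s₀ ≤ s → DifferentiableAt ℝ φ s)
    (hzero : ∀ s, s₀ ≤ s → φ s = 0 → 0 < deriv φ s) (h0 : 0 ≤ φ s₀) :
    ∀ s, s₀ ≤ s → 0 ≤ φ s := by
  intro s hs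
  have hderiv : ∀ x ∈ Icc s₀ s, HasDerivAt (-φ) (-deriv φ x) x :=
    fun x hx => (hdiff x hx.1).hasDerivAt.neg
  have hle : -φ s ≤ 0 :=
    image_le_of_deriv_right_lt_deriv_boundary (B := fun _ => 0) (B' := fun _ => 0)
      (fun x hx => (hderiv x hx).continuousAt.continuousWithinAt)
      (fun x hx => (hderiv x (Ico_subset_Icc_self hx)).hasDerivWithinAt)
      (by simpa using h0) (fun _ => hasDerivAt_const _ _)
      (fun x hx hx0 => neg_lt_zero.mpr (hzero x hx.1 (neg_eq_zero.mp hx0)))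
      ⟨hs, le_rfl⟩
  exact neg_nonpos.mp hle

/-- Barrier argument: nonnegativity persists under the differential inequality. -/
theorem stmt_2 (s₀ : ℝ) (φ : ℝ → ℝ)
    (hdiff : ∀ s, s₀ ≤ s → DifferentiableAt ℝ φ s)
    (hineq : ∀ s, s₀ ≤ s → deriv φ s ≥ -(1/8) * |φ s| + (1/2) * (1 - (φ s) ^ 2))
    (h0 : 0 ≤ φ s₀) :
    ∀ s, s₀ ≤ s → 0 ≤ φ s := by
  refine nonneg_of_deriv_pos_of_eq_zero hdiff (fun s hs hφ => ?_) h0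
  have hbound := hineq s hs
  rw [hφ] at hbound
  norm_num at hbound
  linarith
end

section
/- Let s₁ be a real number and let φ : ℝ → ℝ be a function which is differentiable at every s ≥ s₁ and satisfies φ'(s) ≥ −(1/8)·|φ(s)| + (1/2)·(1 − φ(s)²) for all s ≥ s₁. If φ(s₁) ≥ 1/2, then φ(s) ≥ 1/2 for all s ≥ s₁. -/
open Set

theorem le_of_deriv_pos_of_eq {φ : ℝ → ℝ} {a c : ℝ}
    (hdiff : ∀ s, a ≤ s → DifferentiableAt ℝ φ s)
    (hcross : ∀ s, a ≤ s → φ s = c → 0 < deriv φ s) (ha : c ≤ φ a) :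
    ∀ s, a ≤ s → c ≤ φ s := by
  intro s hs
  have hcont : ContinuousOn φ (Icc a s) := fun u hu =>
    (hdiff u hu.1).continuousAt.continuousWithinAt
  exact image_le_of_deriv_right_lt_deriv_boundary' continuousOn_const
    (fun _ _ => hasDerivWithinAt_const _ _ c) ha hcont
    (fun u hu => (hdiff u hu.1).hasDerivAt.hasDerivWithinAt)
    (fun u hu hu_eq => hcross u hu.1 hu_eq.symm) ⟨hs, le_rfl⟩

/-- Persistence above the threshold 1/2 under the differential inequality. -/
theorem stmt_3 (s₁ : ℝ) (φ : ℝ → ℝ)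
    (hdiff : ∀ s, s₁ ≤ s → DifferentiableAt ℝ φ s)
    (hineq : ∀ s, s₁ ≤ s → deriv φ s ≥ -(1/8) * |φ s| + (1/2) * (1 - (φ s) ^ 2))
    (h0 : 1/2 ≤ φ s₁) :
    ∀ s, s₁ ≤ s → 1/2 ≤ φ s := by
  refine le_of_deriv_pos_of_eq hdiff (fun s hs hφs => ?_) h0
  -- at the level `1/2` the right-hand side is `-1/16 + 3/8 = 5/16 > 0`
  have hbound := hineq s hs
  rw [hφs] at hbound
  norm_num at hbound
  linarith
end

section
/- Let s₁ be a real number, let C ≥ 0, and let v : ℝ → ℝ be a function which is differentiable at every s ≥ s₁, satisfies −1/2 ≤ v(s) ≤ 0 for all s ≥ s₁, and satisfies v'(s) ≥ −2·v(s) − v(s)² − C·exp(−2·(s − s₁)) for all s ≥ s₁. Then for all s ≥ s₁: 0 ≥ v(s) ≥ −(1/2 + C + (1/2 + 2C)²)·(1 + (s − s₁))·exp(−2·(s − s₁)). -/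
/-!
Both bounds come from the integrating factor `exp (k (s - s₁))`. Since `-1/2 ≤ v ≤ 0` we have
`v² ≤ -v/2`, so `v' + (3/2) v ≥ -C exp (-2 (s - s₁))`, which gives the preliminary decay
`v ≥ -(1/2 + 2C) exp (-(3/2)(s - s₁))`. Fed back into the quadratic term, this makes
`exp (2 (s - s₁)) v²` bounded, so `v' + 2 v` is bounded below by a constant times
`exp (-2 (s - s₁))`, and integrating with the factor `exp (2 (s - s₁))` gives the estimate.
-/

open Real Set

theorem monotoneOn_Ici_of_deriv_nonneg {f : ℝ → ℝ} {a : ℝ}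
    (hf : ∀ s, a ≤ s → DifferentiableAt ℝ f s) (hf' : ∀ s, a ≤ s → 0 ≤ deriv f s) :
    MonotoneOn f (Ici a) := by
  apply monotoneOn_of_deriv_nonneg (convex_Ici a)
  · exact fun x hx => (hf x hx).continuousAt.continuousWithinAt
  · intro x hx
    rw [interior_Ici] at hx
    exact (hf x hx.le).differentiableWithinAt
  · intro x hx
    rw [interior_Ici] at hx
    exact hf' x hx.le

theorem sub_sub_le_exp_mul_of_le_deriv_add_mul {v Φ φ : ℝ → ℝ} {a k : ℝ}
    (hv : ∀ s, a ≤ s → DifferentiableAt ℝ v s) (hΦ : ∀ s, a ≤ s → HasDerivAt Φ (φ s) s)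
    (h : ∀ s, a ≤ s → -φ s ≤ exp (k * (s - a)) * (deriv v s + k * v s))
    {s : ℝ} (hs : a ≤ s) :
    v a - (Φ s - Φ a) ≤ exp (k * (s - a)) * v s := by
  have hw : ∀ t, a ≤ t → HasDerivAt (fun t => exp (k * (t - a)) * v t + Φ t)
      (exp (k * (t - a)) * (deriv v t + k * v t) + φ t) t := by
    intro t ht
    have hlin : HasDerivAt (fun t => k * (t - a)) k t := by
      simpa using ((hasDerivAt_id t).sub_const a).const_mul k
    exact ((hlin.exp.mul (hv t ht).hasDerivAt).add (hΦ t ht)).congr_deriv (by ring)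
  have hmono : MonotoneOn (fun t => exp (k * (t - a)) * v t + Φ t) (Ici a) :=
    monotoneOn_Ici_of_deriv_nonneg (fun t ht => (hw t ht).differentiableAt)
      (fun t ht => by rw [(hw t ht).deriv]; linarith [h t ht])
  have := hmono self_mem_Ici hs hs
  simp only [sub_self, mul_zero, exp_zero, one_mul] at this
  linarith

theorem neg_le_exp_three_halves_mul_of_riccati {s₁ C : ℝ} (hC : 0 ≤ C) {v : ℝ → ℝ}
    (hdiff : ∀ s, s₁ ≤ s → DifferentiableAt ℝ v s)
    (hbound : ∀ s, s₁ ≤ s → -1/2 ≤ v s ∧ v s ≤ 0)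
    (hineq : ∀ s, s₁ ≤ s → -2 * v s - v s ^ 2 - C * exp (-2 * (s - s₁)) ≤ deriv v s)
    {s : ℝ} (hs : s₁ ≤ s) :
    -(1/2 + 2 * C) ≤ exp (3/2 * (s - s₁)) * v s := by
  have hΦ : ∀ t, s₁ ≤ t → HasDerivAt (fun t => -2 * C * exp (-1/2 * (t - s₁)))
      (C * exp (-1/2 * (t - s₁))) t := by
    intro t _
    have hlin : HasDerivAt (fun t => -1/2 * (t - s₁)) (-1/2) t := by
      simpa using ((hasDerivAt_id t).sub_const s₁).const_mul (-1/2 : ℝ)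
    exact (hlin.exp.const_mul (-2 * C)).congr_deriv (by ring)
  have hlow : ∀ t, s₁ ≤ t → -(C * exp (-1/2 * (t - s₁))) ≤
      exp (3/2 * (t - s₁)) * (deriv v t + 3/2 * v t) := by
    intro t ht
    obtain ⟨hlo, hhi⟩ := hbound t ht
    have hsq : v t ^ 2 ≤ -(1/2) * v t := by nlinarith
    have hexp : exp (3/2 * (t - s₁)) * exp (-2 * (t - s₁)) = exp (-1/2 * (t - s₁)) := by
      rw [← exp_add]; ring_nf
    have : -(C * exp (-2 * (t - s₁))) ≤ deriv v t + 3/2 * v t := by linarith [hineq t ht]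
    calc -(C * exp (-1/2 * (t - s₁)))
        = exp (3/2 * (t - s₁)) * -(C * exp (-2 * (t - s₁))) := by rw [← hexp]; ring
      _ ≤ exp (3/2 * (t - s₁)) * (deriv v t + 3/2 * v t) := by gcongr
  have := sub_sub_le_exp_mul_of_le_deriv_add_mul hdiff hΦ hlow hs
  simp only [sub_self, mul_zero, exp_zero, mul_one] at this
  have : 0 ≤ C * exp (-1/2 * (s - s₁)) := by positivity
  linarith [(hbound s₁ le_rfl).1]

theorem neg_le_exp_two_mul_of_riccati {s₁ C : ℝ} (hC : 0 ≤ C) {v : ℝ → ℝ}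
    (hdiff : ∀ s, s₁ ≤ s → DifferentiableAt ℝ v s)
    (hbound : ∀ s, s₁ ≤ s → -1/2 ≤ v s ∧ v s ≤ 0)
    (hineq : ∀ s, s₁ ≤ s → -2 * v s - v s ^ 2 - C * exp (-2 * (s - s₁)) ≤ deriv v s)
    {s : ℝ} (hs : s₁ ≤ s) :
    -1/2 - (C + (1/2 + 2 * C) ^ 2) * (s - s₁) ≤ exp (2 * (s - s₁)) * v s := by
  set K := C + (1/2 + 2 * C) ^ 2
  have hΦ : ∀ t, s₁ ≤ t → HasDerivAt (fun t => K * (t - s₁)) K t := fun t _ => by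
    simpa using ((hasDerivAt_id t).sub_const s₁).const_mul K
  have hlow : ∀ t, s₁ ≤ t → -K ≤ exp (2 * (t - s₁)) * (deriv v t + 2 * v t) := by
    intro t ht
    have hτ : 0 ≤ t - s₁ := sub_nonneg.2 ht
    have hprelim := neg_le_exp_three_halves_mul_of_riccati hC hdiff hbound hineq ht
    have hnonpos : exp (3/2 * (t - s₁)) * v t ≤ 0 :=
      mul_nonpos_of_nonneg_of_nonpos (exp_pos _).le (hbound t ht).2
    have hsq : exp (2 * (t - s₁)) * v t ^ 2 ≤ (1/2 + 2 * C) ^ 2 :=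
      calc exp (2 * (t - s₁)) * v t ^ 2
          ≤ exp (3 * (t - s₁)) * v t ^ 2 := by gcongr; linarith
        _ = (exp (3/2 * (t - s₁)) * v t) ^ 2 := by
          rw [mul_pow, sq (exp _), ← exp_add]; ring_nf
        _ ≤ (1/2 + 2 * C) ^ 2 := sq_le_sq' hprelim (by linarith)
    have hexp : exp (2 * (t - s₁)) * exp (-2 * (t - s₁)) = 1 := by
      rw [← exp_add]; simp
    calc -K = exp (2 * (t - s₁)) * (-(v t ^ 2) - C * exp (-2 * (t - s₁)))
          + (exp (2 * (t - s₁)) * v t ^ 2 - (1/2 + 2 * C) ^ 2) := by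
          linear_combination C * hexp
      _ ≤ exp (2 * (t - s₁)) * (deriv v t + 2 * v t) := by
          nlinarith [hineq t ht, exp_pos (2 * (t - s₁))]
  have := sub_sub_le_exp_mul_of_le_deriv_add_mul hdiff hΦ hlow hs
  simp only [sub_self, mul_zero, sub_zero] at this
  linarith [(hbound s₁ le_rfl).1]

/-- Decay estimate (5.15) in Lemma 5.5. -/
theorem stmt_5 (s₁ C : ℝ) (hC : 0 ≤ C) (v : ℝ → ℝ)
    (hdiff : ∀ s, s₁ ≤ s → DifferentiableAt ℝ v s)
    (hbound : ∀ s, s₁ ≤ s → -1/2 ≤ v s ∧ v s ≤ 0)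
    (hineq : ∀ s, s₁ ≤ s →
      deriv v s ≥ -2 * v s - (v s) ^ 2 - C * Real.exp (-2 * (s - s₁))) :
    ∀ s, s₁ ≤ s →
      0 ≥ v s ∧
        v s ≥ -(1/2 + C + (1/2 + 2 * C) ^ 2) * (1 + (s - s₁)) *
          Real.exp (-2 * (s - s₁)) := by
  intro s hs
  refine ⟨(hbound s hs).2, ?_⟩
  have hK : 0 ≤ C + (1/2 + 2 * C) ^ 2 := by positivity
  have hτ : 0 ≤ s - s₁ := sub_nonneg.2 hs
  calc -(1/2 + C + (1/2 + 2 * C) ^ 2) * (1 + (s - s₁)) * exp (-2 * (s - s₁))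
      ≤ (-1/2 - (C + (1/2 + 2 * C) ^ 2) * (s - s₁)) * exp (-2 * (s - s₁)) := by
        gcongr; nlinarith
    _ ≤ exp (2 * (s - s₁)) * v s * exp (-2 * (s - s₁)) := by
        gcongr; exact neg_le_exp_two_mul_of_riccati hC hdiff hbound hineq hs
    _ = v s := by rw [mul_right_comm, ← exp_add]; simp
end

section
/- Let t be a real number and let φ : ℝ → ℝ be a function which is differentiable at every s in the interval [t, t + 15] and satisfies φ'(s) ≥ 3/8 − φ(s)² for all s in [t, t + 15]. If φ(t) ≥ 0, then there exists s in [t, t + 15] with φ(s) ≥ 11/20. -/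
/-!
A Riccati-type inequality `φ' ≥ 3/8 - φ²` pushes `φ` upwards wherever `φ² < 3/8`. In particular
`φ' > 0` wherever `φ = 0`, so `φ` cannot cross below `0` and stays nonnegative. If moreover `φ`
stayed below `11/20`, then `φ' ≥ 3/8 - (11/20)² = 29/400` throughout, and after time `15` the value
`φ` would have grown by `15 · 29/400 > 11/20`, a contradiction.
-/

open Set

theorem nonneg_of_deriv_pos_of_eq_zero_s8 {f : ℝ → ℝ} {a b : ℝ}
    (hf : ∀ x ∈ Icc a b, DifferentiableAt ℝ f x) (ha : 0 ≤ f a)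
    (hpos : ∀ x ∈ Ico a b, f x = 0 → 0 < deriv f x) :
    ∀ x ∈ Icc a b, 0 ≤ f x := by
  have hle := image_le_of_deriv_right_lt_deriv_boundary (f := -f) (f' := -deriv f)
    (B := 0) (B' := 0) (fun x hx => (hf x hx).continuousAt.neg.continuousWithinAt)
    (fun x hx => (hf x (Ico_subset_Icc_self hx)).hasDerivAt.neg.hasDerivWithinAt)
    (by simpa using ha) (fun _ => hasDerivAt_const _ _)
    (fun x hx hx0 => by simpa using hpos x hx (by simpa using hx0))
  intro x hx
  simpa using hle hx

/-- On an interval of length 15, the Riccati inequality forces φ to reach 11/20. -/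
theorem stmt_8 (t : ℝ) (φ : ℝ → ℝ)
    (hdiff : ∀ s ∈ Set.Icc t (t + 15), DifferentiableAt ℝ φ s)
    (hineq : ∀ s ∈ Set.Icc t (t + 15), deriv φ s ≥ 3/8 - (φ s) ^ 2)
    (h0 : 0 ≤ φ t) :
    ∃ s ∈ Set.Icc t (t + 15), 11/20 ≤ φ s := by
  by_contra! hlt
  have hnonneg : ∀ s ∈ Icc t (t + 15), 0 ≤ φ s :=
    nonneg_of_deriv_pos_of_eq_zero_s8 hdiff h0 fun s hs hs0 => by
      linarith [hineq s (Ico_subset_Icc_self hs), sq_eq_zero_iff.mpr hs0]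
  have hslope : ∀ s ∈ interior (Icc t (t + 15)), 29/400 ≤ deriv φ s := fun s hs => by
    have hs := interior_subset hs
    nlinarith [hineq s hs, hnonneg s hs, hlt s hs]
  have hgrowth := (convex_Icc t (t + 15)).mul_sub_le_image_sub_of_le_deriv
    (fun s hs => (hdiff s hs).continuousAt.continuousWithinAt)
    (fun s hs => (hdiff s (interior_subset hs)).differentiableWithinAt) hslope
    t (left_mem_Icc.2 (by linarith)) (t + 15) (right_mem_Icc.2 (by linarith)) (by linarith)
  linarith [hlt (t + 15) (right_mem_Icc.2 (by linarith))]
end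

section
/- Let t be a real number, let ε ≥ 0, and let v : ℝ → ℝ be a function which is differentiable at every s ≥ t, satisfies v(s) ≤ 0 for all s ≥ t, and satisfies v'(s) ≥ −(3/2)·v(s) − ε·Real.sqrt(−2·v(s)) for all s ≥ t. Then for all s ≥ t: −v(s) ≤ (Real.sqrt(−v(t))·exp(−(3/4)·(s − t)) + (2·Real.sqrt 2 / 3)·ε)². -/
/-!
Writing `f = -v`, the hypothesis reads `f' ≤ -2k f + 2k w √f` with `k = 3/4` and equilibrium
`w = (2√2/3) ε`, so `√f` behaves like a solution of `y' ≤ -k y + k w`. The squares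
`(√(f t) e^{-k(x-t)} + w + δ)²` of the solutions of `y' = -k (y - w - δ)` are strict
supersolutions, so the fencing theorem keeps `f` below them; then let `δ → 0`.
-/

open Set Filter Topology Real

lemma hasDerivAt_sq_mul_exp_add (a k t c x : ℝ) :
    HasDerivAt (fun y => (a * exp (-k * (y - t)) + c) ^ 2)
      (-2 * k * (a * exp (-k * (x - t)) + c) * (a * exp (-k * (x - t)))) x := by
  have hlin : HasDerivAt (fun y => -k * (y - t)) (-k) x := by
    simpa using ((hasDerivAt_id x).sub_const t).const_mul (-k)
  refine (((hlin.exp.const_mul a).add_const c).fun_pow 2).congr_deriv ?_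
  norm_num
  ring

section SqrtRiccati

variable {f f' : ℝ → ℝ} {t k w : ℝ}

lemma le_sq_sqrt_mul_exp_add_add (hk : 0 < k) (hw : 0 ≤ w)
    (hf : ContinuousOn f (Ici t)) (hf' : ∀ x ∈ Ici t, HasDerivWithinAt f (f' x) (Ici x) x)
    (hbound : ∀ x ∈ Ici t, f' x ≤ -2 * k * f x + 2 * k * w * √(f x))
    {δ : ℝ} (hδ : 0 < δ) {s : ℝ} (hs : t ≤ s) :
    f s ≤ (√(f t) * exp (-k * (s - t)) + (w + δ)) ^ 2 := by
  set u : ℝ → ℝ := fun x => √(f t) * exp (-k * (x - t)) + (w + δ)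
  have hu_pos : ∀ x, 0 < u x := fun x => by positivity
  refine image_le_of_deriv_right_lt_deriv_boundary (hf.mono Icc_subset_Ici_self)
    (fun x hx => hf' x hx.1) ?_ (hasDerivAt_sq_mul_exp_add _ k t _) ?_ ⟨hs, le_rfl⟩
  · show f t ≤ (√(f t) * exp (-k * (t - t)) + (w + δ)) ^ 2
    rw [sub_self, mul_zero, exp_zero, mul_one]
    rcases le_total 0 (f t) with hft | hft
    · nlinarith [sq_sqrt hft, sqrt_nonneg (f t)]
    · nlinarith
  · intro x hx hfx
    have hsqrt : √(f x) = u x := by rw [hfx, sqrt_sq (hu_pos x).le]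
    have hderiv := hbound x hx.1
    rw [hsqrt, hfx] at hderiv
    have hexp : √(f t) * exp (-k * (x - t)) = u x - (w + δ) := by simp [u]
    rw [hexp]
    nlinarith [mul_pos (mul_pos hk hδ) (hu_pos x)]

theorem le_sq_sqrt_mul_exp_add (hk : 0 < k) (hw : 0 ≤ w)
    (hf : ContinuousOn f (Ici t)) (hf' : ∀ x ∈ Ici t, HasDerivWithinAt f (f' x) (Ici x) x)
    (hbound : ∀ x ∈ Ici t, f' x ≤ -2 * k * f x + 2 * k * w * √(f x))
    {s : ℝ} (hs : t ≤ s) :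
    f s ≤ (√(f t) * exp (-k * (s - t)) + w) ^ 2 := by
  have hlim : Tendsto (fun δ => (√(f t) * exp (-k * (s - t)) + (w + δ)) ^ 2) (𝓝[>] 0)
      (𝓝 ((√(f t) * exp (-k * (s - t)) + w) ^ 2)) := by
    refine tendsto_nhdsWithin_of_tendsto_nhds ?_
    simpa using (Continuous.tendsto (by fun_prop) 0 :
      Tendsto (fun δ => (√(f t) * exp (-k * (s - t)) + (w + δ)) ^ 2) (𝓝 0) _)
  exact ge_of_tendsto hlim (eventually_nhdsWithin_of_forall fun δ hδ =>
    le_sq_sqrt_mul_exp_add_add hk hw hf hf' hbound hδ hs)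

end SqrtRiccati

theorem stmt_10_general (t ε : ℝ) (hε : 0 ≤ ε) (v : ℝ → ℝ)
    (hdiff : ∀ s, t ≤ s → DifferentiableAt ℝ v s)
    (hineq : ∀ s, t ≤ s →
      deriv v s ≥ -(3/2) * v s - ε * Real.sqrt (-2 * v s)) :
    ∀ s, t ≤ s →
      -v s ≤ (Real.sqrt (-v t) * Real.exp (-(3/4) * (s - t))
        + (2 * Real.sqrt 2 / 3) * ε) ^ 2 := by
  intro s hs
  refine le_sq_sqrt_mul_exp_add (f := fun x => -v x) (f' := fun x => -deriv v x)
    (by norm_num) (by positivity)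
    (fun x hx => (hdiff x hx).neg.continuousAt.continuousWithinAt)
    (fun x hx => (hdiff x hx).hasDerivAt.neg.hasDerivWithinAt) (fun x hx => ?_) hs
  have hsqrt : √(-2 * v x) = √2 * √(-v x) := by
    rw [show -2 * v x = 2 * -v x by ring, sqrt_mul zero_le_two]
  linear_combination hineq x hx + ε * hsqrt

/-- Square-root Riccati comparison from the proof of Lemma 5.8. -/
theorem stmt_10 (t ε : ℝ) (hε : 0 ≤ ε) (v : ℝ → ℝ)
    (hdiff : ∀ s, t ≤ s → DifferentiableAt ℝ v s)
    (hnonpos : ∀ s, t ≤ s → v s ≤ 0)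
    (hineq : ∀ s, t ≤ s →
      deriv v s ≥ -(3/2) * v s - ε * Real.sqrt (-2 * v s)) :
    ∀ s, t ≤ s →
      -v s ≤ (Real.sqrt (-v t) * Real.exp (-(3/4) * (s - t))
        + (2 * Real.sqrt 2 / 3) * ε) ^ 2 :=
  stmt_10_general t ε hε v hdiff hineq
end

section
/- Let u be a real-valued function on EuclideanSpace ℝ (Fin 4). Assume: (i) u is bounded; (ii) u is continuous on the closed half-space {x : x 0 ≥ 0}; (iii) u vanishes on the boundary hyperplane {x : x 0 = 0}; (iv) u is twice continuously differentiable on the open half-space {x : x 0 > 0} and harmonic there, meaning that at every point x with x 0 > 0 the sum over i ∈ Fin 4 of the second derivative of u at x twice in the i-th coordinate direction equals 0. Then u(x) = 0 for every x with x 0 ≥ 0. -/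
/-
Compare `u` on the slab `0 ≤ s ≤ a`, `s = ⟪n, x⟫`, with the barrier
`W = M s (2a - s) / a² + ε (‖x‖² + d (a² - s²))`, `d = dim E`, where `M` bounds `u` above.
On the slab `W ≥ ε ‖x‖² ≥ 0`, `W ≥ M` on the face `s = a`, and `ΔW = -2M/a² < 0`, so the
strictly subharmonic `u - W` is `≤ 0` on the boundary of the slab and far out in it, and cannot
have a positive maximum inside (where its Laplacian would be `≤ 0`). Hence `u ≤ W`; taking
`ε = a⁻³` gives `u x = O(1/a)`, so `u ≤ 0` as `a → ∞`. The same applies to `-u`.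
-/

open Filter Topology Laplacian InnerProductSpace Module
open scoped RealInnerProductSpace

theorem IsLocalMax.deriv_deriv_nonpos {f : ℝ → ℝ} {a : ℝ} (h : IsLocalMax f a)
    (hc : ContinuousAt f a) : deriv (deriv f) a ≤ 0 := by
  by_contra! hpos
  -- By the second-derivative test `a` is also a local minimum, so `f` is locally constant.
  have hmin : IsLocalMin f a := isLocalMin_of_deriv_deriv_pos hpos h.deriv_eq_zero hc
  have hconst : f =ᶠ[𝓝 a] fun _ => f a := by
    filter_upwards [h, hmin] with x h₁ h₂ using le_antisymm h₁ h₂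
  have hderiv : deriv f =ᶠ[𝓝 a] fun _ => 0 := by
    simpa using hconst.deriv
  simp [hderiv.deriv_eq] at hpos

theorem deriv_deriv_quadratic (a b c t : ℝ) :
    deriv (deriv fun s : ℝ => a + b * s + c * s ^ 2) t = 2 * c := by
  have h₁ : ∀ s, HasDerivAt (fun s : ℝ => a + b * s + c * s ^ 2) (b + 2 * c * s) s := fun s => by
    refine ((((hasDerivAt_id s).const_mul b).const_add a).add
      ((hasDerivAt_pow 2 s).const_mul c)).congr_deriv ?_
    norm_num
    ring
  have h₂ : HasDerivAt (fun s : ℝ => b + 2 * c * s) (2 * c) t := by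
    simpa using ((hasDerivAt_id t).const_mul (2 * c)).const_add b
  rw [funext fun s => (h₁ s).deriv, h₂.deriv]

section SecondDerivative

variable {F G : Type*} [NormedAddCommGroup F] [NormedSpace ℝ F] [NormedAddCommGroup G]
  [NormedSpace ℝ G] {f : F → G} {x : F}

theorem ContDiffAt.iteratedFDeriv_two_apply (hf : ContDiffAt ℝ 2 f x) (e₁ e₂ : F) :
    iteratedFDeriv ℝ 2 f x ![e₁, e₂] = fderiv ℝ (fun y => fderiv ℝ f y e₂) x e₁ := by
  have hdiff : DifferentiableAt ℝ (fderiv ℝ f) x :=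
    (hf.fderiv_right (m := 1) le_rfl).differentiableAt one_ne_zero
  rw [_root_.iteratedFDeriv_two_apply, fderiv_clm_apply hdiff (differentiableAt_const e₂)]
  simp

theorem ContDiffAt.deriv_deriv_comp_add_smul (hf : ContDiffAt ℝ 2 f x) (e : F) :
    deriv (deriv fun t : ℝ => f (x + t • e)) 0 = iteratedFDeriv ℝ 2 f x ![e, e] := by
  have hline : ∀ t : ℝ, HasDerivAt (fun s : ℝ => x + s • e) e t := fun t => by
    simpa using ((hasDerivAt_id t).smul_const e).const_add x
  have hnear : ∀ᶠ t in 𝓝 (0 : ℝ), ContDiffAt ℝ 2 f (x + t • e) :=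
    (hline 0).continuousAt.eventually (by simpa using hf.eventually (by simp))
  have hderiv :
      deriv (fun t : ℝ => f (x + t • e)) =ᶠ[𝓝 0] fun t => fderiv ℝ f (x + t • e) e := by
    filter_upwards [hnear] with t ht
    exact (((ht.differentiableAt two_ne_zero).hasFDerivAt).comp_hasDerivAt t (hline t)).deriv
  have hdiff : DifferentiableAt ℝ (fun y => fderiv ℝ f y e) (x + (0 : ℝ) • e) := by
    simpa using ((hf.fderiv_right (m := 1) le_rfl).differentiableAt one_ne_zero).clm_apply
      (differentiableAt_const e)
  rw [hderiv.deriv_eq, hf.iteratedFDeriv_two_apply]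
  simpa [Function.comp_def] using (hdiff.hasFDerivAt.comp_hasDerivAt 0 (hline 0)).deriv

end SecondDerivative

variable {E : Type*} [NormedAddCommGroup E] [InnerProductSpace ℝ E]

noncomputable def halfSpaceBarrier (n : E) (M a ε : ℝ) (y : E) : ℝ :=
  M * ⟪n, y⟫ * (2 * a - ⟪n, y⟫) / a ^ 2 + ε * (‖y‖ ^ 2 + finrank ℝ E * (a ^ 2 - ⟪n, y⟫ ^ 2))

theorem contDiff_halfSpaceBarrier (n : E) (M a ε : ℝ) :
    ContDiff ℝ 2 (halfSpaceBarrier n M a ε) := by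
  have hinner : ContDiff ℝ 2 fun y : E => ⟪n, y⟫ := contDiff_const.inner ℝ contDiff_id
  have hnorm : ContDiff ℝ 2 fun y : E => ‖y‖ ^ 2 := contDiff_norm_sq ℝ
  unfold halfSpaceBarrier
  fun_prop

theorem mul_norm_sq_le_halfSpaceBarrier {n y : E} {M a ε : ℝ} (hM : 0 ≤ M) (hε : 0 ≤ ε)
    (h₀ : 0 ≤ ⟪n, y⟫) (ha : ⟪n, y⟫ ≤ a) : ε * ‖y‖ ^ 2 ≤ halfSpaceBarrier n M a ε y := by
  have hquad : 0 ≤ M * ⟪n, y⟫ * (2 * a - ⟪n, y⟫) / a ^ 2 := by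
    have : 0 ≤ 2 * a - ⟪n, y⟫ := by linarith
    positivity
  have hslab : 0 ≤ (finrank ℝ E : ℝ) * (a ^ 2 - ⟪n, y⟫ ^ 2) := by
    have : 0 ≤ a ^ 2 - ⟪n, y⟫ ^ 2 := by nlinarith
    positivity
  have := mul_nonneg hε hslab
  unfold halfSpaceBarrier
  linarith

theorem le_halfSpaceBarrier_of_inner_eq {n y : E} {M a ε : ℝ} (hε : 0 ≤ ε) (ha : a ≠ 0)
    (h : ⟪n, y⟫ = a) : M ≤ halfSpaceBarrier n M a ε y := by
  have := mul_nonneg hε (sq_nonneg ‖y‖)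
  simp only [halfSpaceBarrier, h, sub_self, mul_zero, add_zero]
  field_simp
  linarith

variable [FiniteDimensional ℝ E]

theorem IsLocalMax.laplacian_nonpos {f : E → ℝ} {x : E} (h : IsLocalMax f x)
    (hf : ContDiffAt ℝ 2 f x) : Δ f x ≤ 0 := by
  rw [laplacian_eq_iteratedFDeriv_stdOrthonormalBasis]
  refine Finset.sum_nonpos fun i _ => ?_
  set e := stdOrthonormalBasis ℝ E i
  have hline : Continuous fun t : ℝ => x + t • e := by fun_prop
  rw [← hf.deriv_deriv_comp_add_smul]
  refine IsLocalMax.deriv_deriv_nonpos ?_ ?_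
  · exact IsLocalMax.comp_continuous (g := fun t : ℝ => x + t • e) (by simpa using h)
      hline.continuousAt
  · exact ContinuousAt.comp (g := f) (by simpa using hf.continuousAt) hline.continuousAt

theorem nonpos_of_laplacian_pos {S U : Set E} {v : E → ℝ} (hS : IsClosed S) (hU : IsOpen U)
    (hUS : U ⊆ S) (hcont : ContinuousOn v S) (hsmooth : ContDiffOn ℝ 2 v U)
    (hΔ : ∀ x ∈ U, 0 < Δ v x) (hbdry : ∀ x ∈ S \ U, v x ≤ 0) (R : ℝ)
    (hfar : ∀ x ∈ S, R < ‖x‖ → v x ≤ 0) : ∀ x ∈ S, v x ≤ 0 := by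
  intro z hz
  by_contra! hpos
  set K := S ∩ Metric.closedBall 0 (max R ‖z‖)
  have hzK : z ∈ K := ⟨hz, mem_closedBall_zero_iff.2 (le_max_right _ _)⟩
  obtain ⟨x₀, hx₀K, hmax⟩ := ((isCompact_closedBall 0 _).inter_left hS).exists_isMaxOn
    ⟨z, hzK⟩ (hcont.mono Set.inter_subset_left)
  have hx₀pos : 0 < v x₀ := hpos.trans_le (hmax hzK)
  have hle : ∀ y ∈ S, v y ≤ v x₀ := by
    intro y hy
    by_cases hyK : ‖y‖ ≤ max R ‖z‖
    · exact hmax ⟨hy, mem_closedBall_zero_iff.2 hyK⟩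
    · exact (hfar y hy ((le_max_left _ _).trans_lt (not_le.1 hyK))).trans hx₀pos.le
  have hx₀U : x₀ ∈ U := by
    by_contra hx₀U
    exact hx₀pos.not_ge (hbdry x₀ ⟨hx₀K.1, hx₀U⟩)
  have hlocal : IsLocalMax v x₀ :=
    Filter.mem_of_superset (hU.mem_nhds hx₀U) fun y hy => hle y (hUS hy)
  exact (hΔ x₀ hx₀U).not_ge (hlocal.laplacian_nonpos (hsmooth.contDiffAt (hU.mem_nhds hx₀U)))

theorem laplacian_quadratic (n : E) (α β γ δ : ℝ) (x : E) :
    Δ (fun y : E => α + β * ⟪n, y⟫ + γ * ⟪n, y⟫ ^ 2 + δ * ‖y‖ ^ 2) x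
      = 2 * (γ * ‖n‖ ^ 2 + δ * finrank ℝ E) := by
  set q := fun y : E => α + β * ⟪n, y⟫ + γ * ⟪n, y⟫ ^ 2 + δ * ‖y‖ ^ 2
  have hq : ContDiff ℝ 2 q := by
    have hinner : ContDiff ℝ 2 fun y : E => ⟪n, y⟫ := contDiff_const.inner ℝ contDiff_id
    have hnorm : ContDiff ℝ 2 fun y : E => ‖y‖ ^ 2 := contDiff_norm_sq ℝ
    fun_prop
  have hterm : ∀ e : E, iteratedFDeriv ℝ 2 q x ![e, e] = 2 * (γ * ⟪n, e⟫ ^ 2 + δ * ‖e‖ ^ 2) := by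
    intro e
    have hline : (fun t : ℝ => q (x + t • e)) = fun t => q x
        + (β * ⟪n, e⟫ + 2 * γ * ⟪n, x⟫ * ⟪n, e⟫ + 2 * δ * ⟪x, e⟫) * t
        + (γ * ⟪n, e⟫ ^ 2 + δ * ‖e‖ ^ 2) * t ^ 2 := by
      funext t
      simp only [q, inner_add_right, inner_smul_right, norm_add_sq_real, norm_smul, mul_pow,
        Real.norm_eq_abs, sq_abs]
      ring
    rw [← hq.contDiffAt.deriv_deriv_comp_add_smul, hline, deriv_deriv_quadratic]
  have hparseval : ∑ i, ⟪n, stdOrthonormalBasis ℝ E i⟫ ^ 2 = ‖n‖ ^ 2 := by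
    rw [← real_inner_self_eq_norm_sq, ← (stdOrthonormalBasis ℝ E).sum_inner_mul_inner n n]
    simp only [sq, real_inner_comm n]
  rw [laplacian_eq_iteratedFDeriv_stdOrthonormalBasis]
  simp [hterm, ← Finset.mul_sum, Finset.sum_add_distrib, hparseval, mul_comm]

theorem laplacian_halfSpaceBarrier {n : E} (hn : ‖n‖ = 1) (M ε : ℝ) {a : ℝ} (ha : a ≠ 0)
    (x : E) : Δ (halfSpaceBarrier n M a ε) x = -(2 * M / a ^ 2) := by
  have hquad : halfSpaceBarrier n M a ε = fun y : E => ε * finrank ℝ E * a ^ 2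
      + 2 * M / a * ⟪n, y⟫ + (-(M / a ^ 2) - ε * finrank ℝ E) * ⟪n, y⟫ ^ 2 + ε * ‖y‖ ^ 2 := by
    funext y
    unfold halfSpaceBarrier
    field_simp
    ring
  rw [hquad, laplacian_quadratic, hn]
  ring

section HalfSpace

variable {n : E} {u : E → ℝ} {M : ℝ}

theorem le_halfSpaceBarrier_of_laplacian_nonneg (hn : ‖n‖ = 1) (hM : 0 < M)
    (hu : ∀ x, 0 ≤ ⟪n, x⟫ → u x ≤ M) (hcont : ContinuousOn u {x | 0 ≤ ⟪n, x⟫})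
    (hbdry : ∀ x, ⟪n, x⟫ = 0 → u x ≤ 0) (hsmooth : ContDiffOn ℝ 2 u {x | 0 < ⟪n, x⟫})
    (hΔ : ∀ x, 0 < ⟪n, x⟫ → 0 ≤ Δ u x) {a ε : ℝ} (ha : 0 < a) (hε : 0 < ε) {x : E}
    (hx₀ : 0 ≤ ⟪n, x⟫) (hxa : ⟪n, x⟫ ≤ a) : u x ≤ halfSpaceBarrier n M a ε x := by
  set W := halfSpaceBarrier n M a ε
  have hW : ContDiff ℝ 2 W := contDiff_halfSpaceBarrier n M a ε
  have hinner : Continuous fun y : E => ⟪n, y⟫ := by fun_prop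
  have key := nonpos_of_laplacian_pos (v := u - W) (S := {y | ⟪n, y⟫ ∈ Set.Icc 0 a})
    (U := {y | ⟪n, y⟫ ∈ Set.Ioo 0 a}) (isClosed_Icc.preimage hinner)
    (isOpen_Ioo.preimage hinner) (fun y hy => Set.Ioo_subset_Icc_self hy)
    ((hcont.mono fun y hy => hy.1).sub hW.continuous.continuousOn)
    ((hsmooth.mono fun y hy => hy.1).sub hW.contDiffOn) ?_ ?_ (Real.sqrt (M / ε)) ?_ x
    ⟨hx₀, hxa⟩
  · simpa [sub_nonpos] using key
  · rintro y ⟨hy₀, hya⟩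
    rw [(hsmooth.contDiffAt ((isOpen_lt continuous_const hinner).mem_nhds hy₀)).laplacian_sub
      hW.contDiffAt, laplacian_halfSpaceBarrier hn M ε ha.ne']
    have := hΔ y hy₀
    have : 0 < 2 * M / a ^ 2 := by positivity
    linarith
  · rintro y ⟨⟨hy₀, hya⟩, hyU⟩
    rw [Pi.sub_apply, sub_nonpos]
    have hWy := mul_norm_sq_le_halfSpaceBarrier hM.le hε.le hy₀ hya
    rcases hy₀.eq_or_lt with h₀ | h₀
    · linarith [hbdry y h₀.symm, mul_nonneg hε.le (sq_nonneg ‖y‖)]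
    · rcases hya.eq_or_lt with ha' | ha'
      · linarith [hu y hy₀, le_halfSpaceBarrier_of_inner_eq (M := M) hε.le ha.ne' ha']
      · exact absurd ⟨h₀, ha'⟩ hyU
  · rintro y ⟨hy₀, hya⟩ hy
    rw [Real.sqrt_lt' ((Real.sqrt_nonneg _).trans_lt hy), div_lt_iff₀' hε] at hy
    rw [Pi.sub_apply, sub_nonpos]
    linarith [hu y hy₀, mul_norm_sq_le_halfSpaceBarrier hM.le hε.le hy₀ hya]

theorem nonpos_on_halfSpace_of_laplacian_nonneg (hn : ‖n‖ = 1)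
    (hu : ∀ x, 0 ≤ ⟪n, x⟫ → u x ≤ M)
    (hcont : ContinuousOn u {x | 0 ≤ ⟪n, x⟫}) (hbdry : ∀ x, ⟪n, x⟫ = 0 → u x ≤ 0)
    (hsmooth : ContDiffOn ℝ 2 u {x | 0 < ⟪n, x⟫}) (hΔ : ∀ x, 0 < ⟪n, x⟫ → 0 ≤ Δ u x) :
    ∀ x, 0 ≤ ⟪n, x⟫ → u x ≤ 0 := by
  intro z hz
  set M' := max M 1
  set s := ⟪n, z⟫
  set d : ℝ := (finrank ℝ E : ℝ)
  have hu' : ∀ x, 0 ≤ ⟪n, x⟫ → u x ≤ M' := fun x hx => (hu x hx).trans (le_max_left _ _)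
  have hM' : 0 < M' := lt_max_of_lt_right one_pos
  have hbound : ∀ᶠ a in atTop, u z ≤ (2 * M' * s + ‖z‖ ^ 2 + d) / a := by
    filter_upwards [eventually_ge_atTop (max s 1)] with a ha
    have ha₁ : 1 ≤ a := (le_max_right _ _).trans ha
    have has : s ≤ a := (le_max_left _ _).trans ha
    calc u z ≤ halfSpaceBarrier n M' a (a ^ 3)⁻¹ z :=
          le_halfSpaceBarrier_of_laplacian_nonneg hn hM' hu' hcont hbdry hsmooth hΔ
            (by positivity) (by positivity) hz has
      _ = (M' * s * (2 * a - s) * a + ‖z‖ ^ 2 + d * (a ^ 2 - s ^ 2)) / a ^ 3 := by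
          unfold halfSpaceBarrier
          field_simp
          ring
      _ ≤ (2 * M' * s + ‖z‖ ^ 2 + d) / a := by
          rw [div_le_div_iff₀ (by positivity) (by positivity)]
          have : 0 ≤ d := Nat.cast_nonneg _
          nlinarith [mul_nonneg (mul_nonneg hM'.le (sq_nonneg s)) (sq_nonneg a),
            mul_nonneg (sq_nonneg ‖z‖) (sub_nonneg.2 (le_self_pow₀ ha₁ three_ne_zero)),
            mul_nonneg this (mul_nonneg (sq_nonneg s) (by positivity : (0:ℝ) ≤ a))]
  exact ge_of_tendsto (tendsto_const_nhds.div_atTop tendsto_id) hbound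

end HalfSpace

theorem laplacian_eq_sum_fderiv_single {ι F : Type*} [Fintype ι] [DecidableEq ι]
    [NormedAddCommGroup F] [NormedSpace ℝ F] {f : EuclideanSpace ℝ ι → F}
    {x : EuclideanSpace ℝ ι} (hf : ContDiffAt ℝ 2 f x) :
    Δ f x = ∑ i, fderiv ℝ (fun y => fderiv ℝ f y (EuclideanSpace.single i 1)) x
      (EuclideanSpace.single i 1) := by
  simp [laplacian_eq_iteratedFDeriv_orthonormalBasis f (EuclideanSpace.basisFun ι ℝ),
    hf.iteratedFDeriv_two_apply]

/-- Liouville-type rigidity on the half-space: a bounded harmonic function on the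
open half-space, continuous up to the boundary and vanishing there, is zero. -/
theorem stmt_11 (u : EuclideanSpace ℝ (Fin 4) → ℝ)
    (hbdd : ∃ M : ℝ, ∀ x, |u x| ≤ M)
    (hcont : ContinuousOn u {x : EuclideanSpace ℝ (Fin 4) | 0 ≤ x 0})
    (hbdry : ∀ x : EuclideanSpace ℝ (Fin 4), x 0 = 0 → u x = 0)
    (hsmooth : ContDiffOn ℝ 2 u {x : EuclideanSpace ℝ (Fin 4) | 0 < x 0})
    (hharm : ∀ x : EuclideanSpace ℝ (Fin 4), 0 < x 0 →
      (∑ i : Fin 4,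
        fderiv ℝ (fun y => fderiv ℝ u y (EuclideanSpace.single i (1:ℝ))) x
          (EuclideanSpace.single i (1:ℝ))) = 0) :
    ∀ x : EuclideanSpace ℝ (Fin 4), 0 ≤ x 0 → u x = 0 := by
  obtain ⟨M, hM⟩ := hbdd
  set n : EuclideanSpace ℝ (Fin 4) := EuclideanSpace.single 0 1
  have hn : ‖n‖ = 1 := by simp [n]
  have hcoord : ∀ x : EuclideanSpace ℝ (Fin 4), ⟪n, x⟫ = x 0 := fun x => by
    simp [n, EuclideanSpace.inner_single_left]
  simp only [← hcoord] at hcont hbdry hsmooth hharm ⊢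
  have hΔ : ∀ x, 0 < ⟪n, x⟫ → Δ u x = 0 := fun x hx => by
    rw [laplacian_eq_sum_fderiv_single (hsmooth.contDiffAt
      ((isOpen_lt continuous_const (by fun_prop)).mem_nhds hx)), hharm x hx]
  have hle := nonpos_on_halfSpace_of_laplacian_nonneg hn
    (fun x _ => (le_abs_self _).trans (hM x)) hcont (fun x hx => (hbdry x hx).le) hsmooth
    (fun x hx => (hΔ x hx).ge)
  have hge := nonpos_on_halfSpace_of_laplacian_nonneg (u := -u) hn
    (fun x _ => (neg_le_abs _).trans (hM x)) hcont.neg (fun x hx => by simp [hbdry x hx])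
    hsmooth.neg (fun x hx => by simp [laplacian_neg, hΔ x hx])
  intro x hx
  linarith [hle x hx, hge x hx, Pi.neg_apply u x]
end
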